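/- arXiv:1111.0086 — 6 statements merged into one kernel-verified Lean document; each statement's English description precedes it below -/
import Mathlib

section
/- Composition of bigraphs is associative: for composable bigraphs F : ⟨k,W⟩ → ⟨l,X⟩, G : ⟨l,X⟩ → ⟨m,Y⟩, H : ⟨m,Y⟩ → ⟨n,Z⟩ with pairwise disjoint nodes and edges, (H ∘ G) ∘ F = H ∘ (G ∘ F). -/
/-- A bigraph signature: a set of controls with arities. -/
structure BSignature where
  K : Type
  arity : K → ℕ

/-- A (concrete) bigraph over signature `S` with inner interface `⟨m, X⟩` and
outer interface `⟨n, Y⟩`. -/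
structure Bigraph (S : BSignature) (m : ℕ) (X : Type) (n : ℕ) (Y : Type) where
  V : Type
  E : Type
  ctrl : V → S.K
  prnt : V ⊕ Fin m → V ⊕ Fin n
  link : X ⊕ ((v : V) × Fin (S.arity (ctrl v))) → E ⊕ Y

/-- Lean-equivalence (≎) of two bigraphs with a common interface. -/
structure LeanEquiv {S : BSignature} {m n : ℕ} {X Y : Type}
    (B G : Bigraph S m X n Y) where
  ρV : B.V ≃ G.V
  ρE : B.E ≃ G.E
  hctrl : ∀ v, G.ctrl (ρV v) = B.ctrl v
  hprnt : ∀ x, G.prnt (Sum.map ρV id x) = Sum.map ρV id (B.prnt x)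
  hlink : ∀ x, G.link (Sum.map id
      (fun p => ⟨ρV p.1, Fin.cast (congrArg S.arity (hctrl p.1).symm) p.2⟩) x) =
    Sum.map (fun e => ρE e) id (B.link x)

/-- Lean-equivalence as a relation. -/
def leanEq {S : BSignature} {m n : ℕ} {X Y : Type} (B G : Bigraph S m X n Y) : Prop :=
  Nonempty (LeanEquiv B G)
/-- Composition `G ∘ F` of composable bigraphs. -/
def Bigraph.comp {S : BSignature} {k m n : ℕ} {X Y Z : Type}
    (G : Bigraph S m Y n Z) (F : Bigraph S k X m Y) : Bigraph S k X n Z where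
  V := F.V ⊕ G.V
  E := F.E ⊕ G.E
  ctrl := Sum.elim F.ctrl G.ctrl
  prnt := fun x =>
    match x with
    | .inl (.inl vF) =>
        match F.prnt (.inl vF) with
        | .inl v => .inl (.inl v)
        | .inr j => Sum.map (fun v => Sum.inr v) id (G.prnt (.inr j))
    | .inl (.inr vG) => Sum.map (fun v => Sum.inr v) id (G.prnt (.inl vG))
    | .inr s =>
        match F.prnt (.inr s) with
        | .inl v => .inl (.inl v)
        | .inr j => Sum.map (fun v => Sum.inr v) id (G.prnt (.inr j))
  link := fun x =>
    match x with
    | .inl xn =>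
        match F.link (.inl xn) with
        | .inl e => .inl (.inl e)
        | .inr y => Sum.map (fun e => Sum.inr e) id (G.link (.inl y))
    | .inr ⟨.inl vF, i⟩ =>
        match F.link (.inr ⟨vF, i⟩) with
        | .inl e => .inl (.inl e)
        | .inr y => Sum.map (fun e => Sum.inr e) id (G.link (.inl y))
    | .inr ⟨.inr vG, i⟩ => Sum.map (fun e => Sum.inr e) id (G.link (.inr ⟨vG, i⟩))

/-- composition of bigraphs is associative (up to the canonical
identification of the disjoint unions, i.e. up to lean-equivalence). -/
theorem stmt7 {S : BSignature} {k l m n : ℕ} {W X Y Z : Type}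
    (F : Bigraph S k W l X) (G : Bigraph S l X m Y) (H : Bigraph S m Y n Z) :
    leanEq ((H.comp G).comp F) (H.comp (G.comp F)) := by
  refine ⟨⟨(Equiv.sumAssoc F.V G.V H.V).symm, (Equiv.sumAssoc F.E G.E H.E).symm, ?_, ?_, ?_⟩⟩
  · rintro (v | v | v) <;> rfl
  · rintro ((vF | vG | vH) | s) <;>
      dsimp only [Bigraph.comp, Equiv.sumAssoc, Equiv.coe_fn_symm_mk, Equiv.symm, DFunLike.coe, EquivLike.coe, Sum.map] <;>
      first
      | (rcases hF : F.prnt (.inl vF) with v | j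
         · simp [hF]
         · rcases hG : G.prnt (.inr j) with v | j' <;> simp [hF, hG] <;>
             rcases hH : H.prnt (.inr j') with v | j'' <;> simp [hH])
      | (rcases hG : G.prnt (.inl vG) with v | j <;> simp [hG] <;>
           rcases hH : H.prnt (.inr j) with v | j' <;> simp [hH])
      | (simp; rcases hH : H.prnt (.inl vH) with v | j <;> simp [hH])
      | (rcases hF : F.prnt (.inr s) with v | j
         · simp [hF]
         · rcases hG : G.prnt (.inr j) with v | j' <;> simp [hF, hG] <;>
             rcases hH : H.prnt (.inr j') with v | j'' <;> simp [hH])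
  · rintro (w | ⟨vF | vG | vH, ⟨i, hi⟩⟩) <;>
      dsimp only [Bigraph.comp, Equiv.sumAssoc, Equiv.coe_fn_symm_mk, Equiv.symm, DFunLike.coe, EquivLike.coe, Sum.map, Fin.cast, id, Sum.elim_inl, Sum.elim_inr, Function.comp_apply] <;>
      first
      | (rcases hF : F.link (.inl w) with e | x
         · simp [hF]
         · rcases hG : G.link (.inl x) with e | y <;> simp [hF, hG] <;>
             rcases hH : H.link (.inl y) with e | z <;> simp [hH])
      | (rcases hF : F.link (.inr ⟨vF, ⟨i, hi⟩⟩) with e | x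
         · simp [hF]
         · rcases hG : G.link (.inl x) with e | y <;> simp [hF, hG] <;>
             rcases hH : H.link (.inl y) with e | z <;> simp [hH])
      | (rcases hG : G.link (.inr ⟨vG, ⟨i, hi⟩⟩) with e | y <;> simp [hG] <;>
           rcases hH : H.link (.inl y) with e | z <;> simp [hH])
      | (simp; rcases hH : H.link (.inr ⟨vH, ⟨i, hi⟩⟩) with e | z <;> simp [hH])
end

section
/- Juxtaposition of bigraphs is compatible with composition (bifunctoriality/interchange): (G ⊗ G') ∘ (F ⊗ F') = (G ∘ F) ⊗ (G' ∘ F') whenever all compositions are defined and all node and edge sets are pairwise disjoint. -/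
/-- Juxtaposition `F ⊗ G` of bigraphs with disjoint supports. -/
def Bigraph.juxt {S : BSignature} {k m l n : ℕ} {X Y W Z : Type}
    (F : Bigraph S k X m Y) (G : Bigraph S l W n Z) :
    Bigraph S (k + l) (X ⊕ W) (m + n) (Y ⊕ Z) where
  V := F.V ⊕ G.V
  E := F.E ⊕ G.E
  ctrl := Sum.elim F.ctrl G.ctrl
  prnt := fun x =>
    match x with
    | .inl (.inl vF) => Sum.map Sum.inl (Fin.castAdd n) (F.prnt (.inl vF))
    | .inl (.inr vG) => Sum.map Sum.inr (Fin.natAdd m) (G.prnt (.inl vG))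
    | .inr s =>
        match finSumFinEquiv.symm s with
        | .inl sF => Sum.map Sum.inl (Fin.castAdd n) (F.prnt (.inr sF))
        | .inr sG => Sum.map Sum.inr (Fin.natAdd m) (G.prnt (.inr sG))
  link := fun x =>
    match x with
    | .inl (.inl xX) => Sum.map Sum.inl Sum.inl (F.link (.inl xX))
    | .inl (.inr w) => Sum.map Sum.inr Sum.inr (G.link (.inl w))
    | .inr ⟨.inl vF, i⟩ => Sum.map Sum.inl Sum.inl (F.link (.inr ⟨vF, i⟩))
    | .inr ⟨.inr vG, i⟩ => Sum.map Sum.inr Sum.inr (G.link (.inr ⟨vG, i⟩))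


/-- Auxiliary: explicit sum-shuffle equivalence. -/
def shuffle (a b c d : Type) : (a ⊕ b) ⊕ (c ⊕ d) ≃ (a ⊕ c) ⊕ (b ⊕ d) where
  toFun x := match x with
    | .inl (.inl v) => .inl (.inl v)
    | .inl (.inr v) => .inr (.inl v)
    | .inr (.inl v) => .inl (.inr v)
    | .inr (.inr v) => .inr (.inr v)
  invFun x := match x with
    | .inl (.inl v) => .inl (.inl v)
    | .inl (.inr v) => .inr (.inl v)
    | .inr (.inl v) => .inl (.inr v)
    | .inr (.inr v) => .inr (.inr v)
  left_inv x := by rcases x with (v|v)|(v|v) <;> rfl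
  right_inv x := by rcases x with (v|v)|(v|v) <;> rfl

/-- juxtaposition is compatible with composition (interchange law):
`(G ⊗ G') ∘ (F ⊗ F') = (G ∘ F) ⊗ (G' ∘ F')`. -/
theorem stmt8 {S : BSignature} {k m n k' m' n' : ℕ} {X Y Z X' Y' Z' : Type}
    (F : Bigraph S k X m Y) (G : Bigraph S m Y n Z)
    (F' : Bigraph S k' X' m' Y') (G' : Bigraph S m' Y' n' Z') :
    leanEq ((G.juxt G').comp (F.juxt F')) ((G.comp F).juxt (G'.comp F')) := by
  refine ⟨shuffle F.V F'.V G.V G'.V,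
    shuffle F.E F'.E G.E G'.E, ?_, ?_, ?_⟩
  · rintro ((v | v) | (v | v)) <;> rfl
  · rintro ((((v | v) | (v | v)) | s))
    · simp only [shuffle, Equiv.coe_fn_mk, DFunLike.coe, EquivLike.coe, Sum.map,
        Bigraph.comp, Bigraph.juxt]
      rcases hwj : F.prnt (.inl v) with w | j <;> simp [hwj]
      rcases h2 : G.prnt (.inr j) with w | j' <;> simp [h2]
    · simp only [shuffle, Equiv.coe_fn_mk, DFunLike.coe, EquivLike.coe, Sum.map,
        Bigraph.comp, Bigraph.juxt]
      rcases hwj : F'.prnt (.inl v) with w | j <;> simp [hwj]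
      rcases h2 : G'.prnt (.inr j) with w | j' <;> simp [h2]
    · simp only [shuffle, Equiv.coe_fn_mk, DFunLike.coe, EquivLike.coe, Sum.map,
        Bigraph.comp, Bigraph.juxt]
      rcases hwj : G.prnt (.inl v) with w | j <;> simp [hwj]
    · simp only [shuffle, Equiv.coe_fn_mk, DFunLike.coe, EquivLike.coe, Sum.map,
        Bigraph.comp, Bigraph.juxt]
      rcases hwj : G'.prnt (.inl v) with w | j <;> simp [hwj]
    · induction s using Fin.addCases with
      | left sF =>
        simp only [shuffle, Equiv.coe_fn_mk, DFunLike.coe, EquivLike.coe, Sum.map,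
          Bigraph.comp, Bigraph.juxt, finSumFinEquiv_symm_apply_castAdd]
        rcases hwj : F.prnt (.inr sF) with w | j <;> simp [hwj]
        rcases h2 : G.prnt (.inr j) with w | j' <;> simp [h2]
      | right sG =>
        simp only [shuffle, Equiv.coe_fn_mk, DFunLike.coe, EquivLike.coe, Sum.map,
          Bigraph.comp, Bigraph.juxt, finSumFinEquiv_symm_apply_natAdd]
        rcases hwj : F'.prnt (.inr sG) with w | j <;> simp [hwj]
        rcases h2 : G'.prnt (.inr j) with w | j' <;> simp [h2]
  · rintro ((x | x) | ⟨((v | v) | (v | v)), i⟩)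
    · simp only [shuffle, Equiv.coe_fn_mk, DFunLike.coe, EquivLike.coe, Sum.map,
        Bigraph.comp, Bigraph.juxt]
      rcases hey : F.link (.inl x) with e | y <;> simp [hey]
      rcases hez : G.link (.inl y) with e | z <;> simp [hez]
    · simp only [shuffle, Equiv.coe_fn_mk, DFunLike.coe, EquivLike.coe, Sum.map,
        Bigraph.comp, Bigraph.juxt]
      rcases hey : F'.link (.inl x) with e | y <;> simp [hey]
      rcases hez : G'.link (.inl y) with e | z <;> simp [hez]
    · simp only [shuffle, Equiv.coe_fn_mk, DFunLike.coe, EquivLike.coe, Sum.map,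
        Bigraph.comp, Bigraph.juxt, Fin.cast]
      rcases hey : F.link (.inr ⟨v, i⟩) with e | y <;> simp [hey, (show F.link (.inr ⟨v, ⟨i.1, i.2⟩⟩) = _ from hey)]
      rcases hez : G.link (.inl y) with e | z <;> simp [hez]
    · simp only [shuffle, Equiv.coe_fn_mk, DFunLike.coe, EquivLike.coe, Sum.map,
        Bigraph.comp, Bigraph.juxt, Fin.cast]
      rcases hey : F'.link (.inr ⟨v, i⟩) with e | y <;> simp [hey, (show F'.link (.inr ⟨v, ⟨i.1, i.2⟩⟩) = _ from hey)]
      rcases hez : G'.link (.inl y) with e | z <;> simp [hez]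
    · simp only [shuffle, Equiv.coe_fn_mk, DFunLike.coe, EquivLike.coe, Sum.map,
        Bigraph.comp, Bigraph.juxt, Fin.cast]
      rcases hez : G.link (.inr ⟨v, i⟩) with e | z <;> simp [hez, (show G.link (.inr ⟨v, ⟨i.1, i.2⟩⟩) = _ from hez)]
    · simp only [shuffle, Equiv.coe_fn_mk, DFunLike.coe, EquivLike.coe, Sum.map,
        Bigraph.comp, Bigraph.juxt, Fin.cast]
      rcases hez : G'.link (.inr ⟨v, i⟩) with e | z <;> simp [hez, (show G'.link (.inr ⟨v, ⟨i.1, i.2⟩⟩) = _ from hez)]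
end

section
/- Lean-equivalence is a congruence for composition: if F ≎ F' and G ≎ G' (with matching interfaces and all compositions defined), then G ∘ F ≎ G' ∘ F'. -/
lemma comp_prnt_thru {S : BSignature} {k m n : ℕ} {X Y Z : Type}
    (G : Bigraph S m Y n Z) (F : Bigraph S k X m Y)
    (x : (F.V ⊕ Fin k)) :
    (match F.prnt x with
      | Sum.inl v => Sum.inl (Sum.inl v)
      | Sum.inr j => Sum.map (fun v => Sum.inr v) id (G.prnt (Sum.inr j))
      : (F.V ⊕ G.V) ⊕ Fin n) =
    Sum.elim (fun v => Sum.inl (Sum.inl v))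
      (fun j => Sum.map (fun v => Sum.inr v) id (G.prnt (Sum.inr j))) (F.prnt x) := by
  cases F.prnt x <;> rfl

lemma comp_link_thru {S : BSignature} {k m n : ℕ} {X Y Z : Type}
    (G : Bigraph S m Y n Z) (F : Bigraph S k X m Y)
    (x : X ⊕ ((v : F.V) × Fin (S.arity (F.ctrl v)))) :
    (match F.link x with
      | Sum.inl e => Sum.inl (Sum.inl e)
      | Sum.inr y => Sum.map (fun e => Sum.inr e) id (G.link (Sum.inl y))
      : (F.E ⊕ G.E) ⊕ Z) =
    Sum.elim (fun e => Sum.inl (Sum.inl e))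
      (fun y => Sum.map (fun e => Sum.inr e) id (G.link (Sum.inl y))) (F.link x) := by
  cases F.link x <;> rfl

/-- lean-equivalence is a congruence for composition. -/
theorem stmt9 {S : BSignature} {k m n : ℕ} {X Y Z : Type}
    (F F' : Bigraph S k X m Y) (G G' : Bigraph S m Y n Z)
    (hF : leanEq F F') (hG : leanEq G G') :
    leanEq (G.comp F) (G'.comp F') := by
  obtain ⟨eF⟩ := hF
  obtain ⟨eG⟩ := hG
  refine ⟨⟨Equiv.sumCongr eF.ρV eG.ρV, Equiv.sumCongr eF.ρE eG.ρE, ?_, ?_, ?_⟩⟩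
  · rintro (vF | vG)
    · exact eF.hctrl vF
    · exact eG.hctrl vG
  · rintro ((vF | vG) | s)
    · have h : F'.prnt (Sum.inl (eF.ρV vF)) = Sum.map eF.ρV id (F.prnt (Sum.inl vF)) :=
        eF.hprnt (Sum.inl vF)
      show (match F'.prnt (Sum.inl (eF.ρV vF)) with
            | Sum.inl v => Sum.inl (Sum.inl v)
            | Sum.inr j => Sum.map (fun v => Sum.inr v) id (G'.prnt (Sum.inr j))) =
        Sum.map (Equiv.sumCongr eF.ρV eG.ρV) id
          (match F.prnt (Sum.inl vF) with
            | Sum.inl v => Sum.inl (Sum.inl v)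
            | Sum.inr j => Sum.map (fun v => Sum.inr v) id (G.prnt (Sum.inr j)))
      rw [comp_prnt_thru G F (Sum.inl vF), show (match F'.prnt (Sum.inl (eF.ρV vF)) with
            | Sum.inl v => Sum.inl (Sum.inl v)
            | Sum.inr j => Sum.map (fun v => Sum.inr v) id (G'.prnt (Sum.inr j))
            : (F'.V ⊕ G'.V) ⊕ Fin n) =
          Sum.elim (fun v => Sum.inl (Sum.inl v))
            (fun j => Sum.map (fun v => Sum.inr v) id (G'.prnt (Sum.inr j)))
            (F'.prnt (Sum.inl (eF.ρV vF))) from comp_prnt_thru G' F' _, h]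
      cases hx : F.prnt (Sum.inl vF) with
      | inl v => simp
      | inr j =>
        have hg : G'.prnt (Sum.inr j) = Sum.map eG.ρV id (G.prnt (Sum.inr j)) :=
          eG.hprnt (Sum.inr j)
        simp only [Sum.map_inr, Sum.elim_inr, id, hg]
        cases G.prnt (Sum.inr j) <;> simp
    · have hg : G'.prnt (Sum.inl (eG.ρV vG)) = Sum.map eG.ρV id (G.prnt (Sum.inl vG)) :=
        eG.hprnt (Sum.inl vG)
      show Sum.map (fun v => Sum.inr v) id (G'.prnt (Sum.inl (eG.ρV vG))) =
        Sum.map (Equiv.sumCongr eF.ρV eG.ρV) id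
          (Sum.map (fun v => Sum.inr v) id (G.prnt (Sum.inl vG)))
      rw [hg]
      cases G.prnt (Sum.inl vG) <;> simp
    · have h : F'.prnt (Sum.inr s) = Sum.map eF.ρV id (F.prnt (Sum.inr s)) :=
        eF.hprnt (Sum.inr s)
      show (match F'.prnt (Sum.inr s) with
            | Sum.inl v => Sum.inl (Sum.inl v)
            | Sum.inr j => Sum.map (fun v => Sum.inr v) id (G'.prnt (Sum.inr j))) =
        Sum.map (Equiv.sumCongr eF.ρV eG.ρV) id
          (match F.prnt (Sum.inr s) with
            | Sum.inl v => Sum.inl (Sum.inl v)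
            | Sum.inr j => Sum.map (fun v => Sum.inr v) id (G.prnt (Sum.inr j)))
      rw [comp_prnt_thru G F (Sum.inr s), comp_prnt_thru G' F' (Sum.inr s : F'.V ⊕ Fin k), h]
      cases hx : F.prnt (Sum.inr s) with
      | inl v => simp
      | inr j =>
        have hg : G'.prnt (Sum.inr j) = Sum.map eG.ρV id (G.prnt (Sum.inr j)) :=
          eG.hprnt (Sum.inr j)
        simp only [Sum.map_inr, Sum.elim_inr, id, hg]
        cases G.prnt (Sum.inr j) <;> simp
  · have hGl : ∀ y : Y, G'.link (Sum.inl y) =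
        Sum.map (fun e => eG.ρE e) id (G.link (Sum.inl y)) :=
      fun y => eG.hlink (Sum.inl y)
    rintro (xn | ⟨(vF | vG), i⟩)
    · have h : F'.link (Sum.inl xn) = Sum.map (fun e => eF.ρE e) id (F.link (Sum.inl xn)) :=
        eF.hlink (Sum.inl xn)
      show (match F'.link (Sum.inl xn) with
            | Sum.inl e => Sum.inl (Sum.inl e)
            | Sum.inr y => Sum.map (fun e => Sum.inr e) id (G'.link (Sum.inl y))) =
        Sum.map (fun e => Equiv.sumCongr eF.ρE eG.ρE e) id
          (match F.link (Sum.inl xn) with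
            | Sum.inl e => Sum.inl (Sum.inl e)
            | Sum.inr y => Sum.map (fun e => Sum.inr e) id (G.link (Sum.inl y)))
      rw [comp_link_thru G F (Sum.inl xn), comp_link_thru G' F' (Sum.inl xn), h]
      cases hx : F.link (Sum.inl xn) with
      | inl e => simp
      | inr y =>
        simp only [Sum.map_inr, Sum.elim_inr, id, hGl y]
        cases G.link (Sum.inl y) <;> simp
    · have h := eF.hlink (Sum.inr ⟨vF, i⟩)
      simp only [Sum.map_inr] at h
      show (match F'.link (Sum.inr ⟨eF.ρV vF,
              Fin.cast (congrArg S.arity (eF.hctrl vF).symm) i⟩) with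
            | Sum.inl e => Sum.inl (Sum.inl e)
            | Sum.inr y => Sum.map (fun e => Sum.inr e) id (G'.link (Sum.inl y))) =
        Sum.map (fun e => Equiv.sumCongr eF.ρE eG.ρE e) id
          (match F.link (Sum.inr ⟨vF, i⟩) with
            | Sum.inl e => Sum.inl (Sum.inl e)
            | Sum.inr y => Sum.map (fun e => Sum.inr e) id (G.link (Sum.inl y)))
      rw [comp_link_thru G F (Sum.inr ⟨vF, i⟩), comp_link_thru G' F' _, h]
      cases hx : F.link (Sum.inr ⟨vF, i⟩) with
      | inl e => simp
      | inr y =>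
        simp only [Sum.map_inr, Sum.elim_inr, id, hGl y]
        cases G.link (Sum.inl y) <;> simp
    · have hg := eG.hlink (Sum.inr ⟨vG, i⟩)
      simp only [Sum.map_inr] at hg
      show Sum.map (fun e => Sum.inr e) id (G'.link (Sum.inr ⟨eG.ρV vG,
          Fin.cast (congrArg S.arity (eG.hctrl vG).symm) i⟩)) =
        Sum.map (fun e => Equiv.sumCongr eF.ρE eG.ρE e) id
          (Sum.map (fun e => Sum.inr e) id (G.link (Sum.inr ⟨vG, i⟩)))
      rw [hg]
      cases G.link (Sum.inr ⟨vG, i⟩) <;> simp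
end

section
/- Lean-equivalence is a congruence for juxtaposition: if F ≎ F' and G ≎ G', then G ⊗ F ≎ G' ⊗ F', provided the juxtapositions are defined (disjoint supports and name sets). -/
@[simp] theorem juxt_V_sumCongr_apply {S : BSignature} {k m l n : ℕ} {X Y W Z : Type}
    (F F' : Bigraph S k X m Y) (G G' : Bigraph S l W n Z) (e : F.V ≃ F'.V) (e' : G.V ≃ G'.V) :
    @DFunLike.coe ((F.juxt G).V ≃ (F'.juxt G').V) _ _ _ (e.sumCongr e') = Sum.map e e' := rfl

@[simp] theorem juxt_E_sumCongr_apply {S : BSignature} {k m l n : ℕ} {X Y W Z : Type}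
    (F F' : Bigraph S k X m Y) (G G' : Bigraph S l W n Z) (e : F.E ≃ F'.E) (e' : G.E ≃ G'.E) :
    @DFunLike.coe ((F.juxt G).E ≃ (F'.juxt G').E) _ _ _ (e.sumCongr e') = Sum.map e e' := rfl

/-- lean-equivalence is a congruence for juxtaposition. -/
theorem stmt10 {S : BSignature} {k m l n : ℕ} {X Y W Z : Type}
    (F F' : Bigraph S k X m Y) (G G' : Bigraph S l W n Z)
    (hF : leanEq F F') (hG : leanEq G G') :
    leanEq (F.juxt G) (F'.juxt G') := by
  obtain ⟨eF⟩ := hF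
  obtain ⟨eG⟩ := hG
  refine ⟨⟨eF.ρV.sumCongr eG.ρV, eF.ρE.sumCongr eG.ρE, ?_, ?_, ?_⟩⟩
  · rintro (v | v) <;> dsimp only [juxt_V_sumCongr_apply, juxt_E_sumCongr_apply] <;> simp [Bigraph.juxt, eF.hctrl, eG.hctrl]
  · rintro ((v | v) | s) <;> dsimp only [juxt_V_sumCongr_apply, juxt_E_sumCongr_apply]
    · have := eF.hprnt (.inl v)
      simp only [Bigraph.juxt, Equiv.sumCongr_apply, Sum.map_map] at *
      cases h : F.prnt (.inl v) <;> rw [h] at this <;> simp_all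
    · have := eG.hprnt (.inl v)
      simp only [Bigraph.juxt, Equiv.sumCongr_apply, Sum.map_map] at *
      cases h : G.prnt (.inl v) <;> rw [h] at this <;> simp_all
    · simp only [Bigraph.juxt, Equiv.sumCongr_apply, Sum.map_map, Sum.map_inr, id]
      cases hs : finSumFinEquiv.symm s with
      | inl sF =>
        have := eF.hprnt (.inr sF)
        simp only [Sum.map_inr, id] at this
        cases h : F.prnt (.inr sF) <;> rw [h] at this <;> simp_all
      | inr sG =>
        have := eG.hprnt (.inr sG)
        simp only [Sum.map_inr, id] at this
        cases h : G.prnt (.inr sG) <;> rw [h] at this <;> simp_all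
  · rintro ((x | x) | ⟨(v | v), i⟩) <;> dsimp only [juxt_V_sumCongr_apply, juxt_E_sumCongr_apply]
    · have := eF.hlink (.inl x)
      simp only [Bigraph.juxt, Sum.map_inl, id] at *
      cases h : F.link (.inl x) <;> rw [h] at this <;> simp_all
    · have := eG.hlink (.inl x)
      simp only [Bigraph.juxt, Sum.map_inl, id] at *
      cases h : G.link (.inl x) <;> rw [h] at this <;> simp_all
    · have := eF.hlink (.inr ⟨v, i⟩)
      simp only [Bigraph.juxt, Sum.map_inr, id] at *
      cases h : F.link (.inr ⟨v, i⟩) <;> rw [h] at this <;> simp_all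
    · have := eG.hlink (.inr ⟨v, i⟩)
      simp only [Bigraph.juxt, Sum.map_inr, id] at *
      cases h : G.link (.inr ⟨v, i⟩) <;> rw [h] at this <;> simp_all
end

section
/- The encoding of a bigraph as a multiset of relational facts is injective up to renaming: if ⟦B⟧ = ⟦B'⟧ as multisets then B = B'. -/
/-- Relational facts of the bigraph relational model (bigraph names omitted,
as in the paper's convention). -/
inductive BFact (ν : Type) (κ : Type) where
  | is_node (v : ν)
  | is_root (r : ν)
  | is_site (s : ν)
  | is_port (p : ν)
  | is_i_name (x : ν)
  | is_o_name (y : ν)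
  | is_e_name (e : ν)
  | lc (v : ν) (k : κ)
  | lp (p : ν) (v : ν)
  | prnt (s : ν) (d : ν)
  | link (s : ν) (d : ν)
  | has_child_p (d : ν) (n : ℕ)
  | has_child_l (d : ν) (n : ℕ)
  | vp (v : ν) (n : ℕ)
  deriving DecidableEq

/-- A bigraph presented relationally: finite sets of named constituents together
with the graphs of the control, parent, link and port-of maps. -/
structure RBigraph (ν κ : Type) where
  nodes : Finset ν
  roots : Finset ν
  sites : Finset ν
  iNames : Finset ν
  oNames : Finset ν
  edges : Finset ν
  ports : Finset ν
  ctrlG : Finset (ν × κ)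
  prntG : Finset (ν × ν)
  linkG : Finset (ν × ν)
  lpG : Finset (ν × ν)

variable {ν κ : Type} [DecidableEq ν]

/-- Number of place-graph children of `d`. -/
def RBigraph.childP [DecidableEq ν] (B : RBigraph ν κ) (d : ν) : ℕ :=
  (B.prntG.filter (fun p => p.2 = d)).card

/-- Number of link-graph children (points) of `d`. -/
def RBigraph.childL [DecidableEq ν] (B : RBigraph ν κ) (d : ν) : ℕ :=
  (B.linkG.filter (fun p => p.2 = d)).card

/-- The encoding `⟦B⟧` of a bigraph as a multiset of relational facts. -/
def RBigraph.encode [DecidableEq ν] (B : RBigraph ν κ) : Multiset (BFact ν κ) :=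
  B.nodes.val.map BFact.is_node +
  B.roots.val.map BFact.is_root +
  B.sites.val.map BFact.is_site +
  B.ports.val.map BFact.is_port +
  B.iNames.val.map BFact.is_i_name +
  B.oNames.val.map BFact.is_o_name +
  B.edges.val.map BFact.is_e_name +
  B.ctrlG.val.map (fun p => BFact.lc p.1 p.2) +
  B.prntG.val.map (fun p => BFact.prnt p.1 p.2) +
  B.linkG.val.map (fun p => BFact.link p.1 p.2) +
  B.lpG.val.map (fun p => BFact.lp p.1 p.2) +
  (B.nodes ∪ B.roots).val.map (fun d => BFact.has_child_p d (B.childP d)) +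
  B.oNames.val.map (fun d => BFact.has_child_l d (B.childL d))

/-- The support of a relational bigraph: all names occurring in it. -/
def RBigraph.names (B : RBigraph ν κ) : Finset ν :=
  B.nodes ∪ B.roots ∪ B.sites ∪ B.iNames ∪ B.oNames ∪ B.edges ∪ B.ports

/-- Well-formedness of a relational bigraph: constituent sets are pairwise
disjoint and the control, parent, link and port-of graphs are graphs of total
functions with the expected (co)domains. -/
def RBigraph.WF (B : RBigraph ν κ) : Prop :=
  Disjoint B.nodes B.roots ∧ Disjoint B.nodes B.sites ∧ Disjoint B.nodes B.iNames ∧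
  Disjoint B.nodes B.oNames ∧ Disjoint B.nodes B.edges ∧ Disjoint B.nodes B.ports ∧
  Disjoint B.roots B.sites ∧ Disjoint B.roots B.iNames ∧ Disjoint B.roots B.oNames ∧
  Disjoint B.roots B.edges ∧ Disjoint B.roots B.ports ∧
  Disjoint B.sites B.iNames ∧ Disjoint B.sites B.oNames ∧ Disjoint B.sites B.edges ∧
  Disjoint B.sites B.ports ∧
  Disjoint B.iNames B.oNames ∧ Disjoint B.iNames B.edges ∧ Disjoint B.iNames B.ports ∧
  Disjoint B.oNames B.edges ∧ Disjoint B.oNames B.ports ∧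
  Disjoint B.edges B.ports ∧
  (∀ v ∈ B.nodes, ∃! k, (v, k) ∈ B.ctrlG) ∧
  (∀ p ∈ B.ctrlG, p.1 ∈ B.nodes) ∧
  (∀ x, x ∈ B.nodes ∪ B.sites → ∃! y, (x, y) ∈ B.prntG) ∧
  (∀ p ∈ B.prntG, p.1 ∈ B.nodes ∪ B.sites ∧ p.2 ∈ B.nodes ∪ B.roots) ∧
  (∀ x, x ∈ B.iNames ∪ B.ports → ∃! y, (x, y) ∈ B.linkG) ∧
  (∀ p ∈ B.linkG, p.1 ∈ B.iNames ∪ B.ports ∧ p.2 ∈ B.edges ∪ B.oNames) ∧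
  (∀ p ∈ B.ports, ∃! v, (p, v) ∈ B.lpG) ∧
  (∀ q ∈ B.lpG, q.1 ∈ B.ports ∧ q.2 ∈ B.nodes)

/-- Lean-equivalence of relational bigraphs: a renaming that is bijective on
nodes, edges and ports, fixes the interfaces, and commutes with the control,
parent, link and port-of graphs. -/
def RLeanEquiv (B G : RBigraph ν κ) : Prop :=
  ∃ ρ : ν → ν,
    Set.BijOn ρ ↑B.nodes ↑G.nodes ∧
    Set.BijOn ρ ↑B.edges ↑G.edges ∧
    Set.BijOn ρ ↑B.ports ↑G.ports ∧
    B.roots = G.roots ∧ B.sites = G.sites ∧ B.iNames = G.iNames ∧ B.oNames = G.oNames ∧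
    (∀ x ∈ B.roots ∪ B.sites ∪ B.iNames ∪ B.oNames, ρ x = x) ∧
    (∀ v k, (v, k) ∈ B.ctrlG ↔ (ρ v, k) ∈ G.ctrlG) ∧
    (∀ x y, (x, y) ∈ B.prntG ↔ (ρ x, ρ y) ∈ G.prntG) ∧
    (∀ x y, (x, y) ∈ B.linkG ↔ (ρ x, ρ y) ∈ G.linkG) ∧
    (∀ p v, (p, v) ∈ B.lpG ↔ (ρ p, ρ v) ∈ G.lpG)


private lemma fm_add {α β : Type*} (f : α → Option β) (s t : Multiset α) :
    (s + t).filterMap f = s.filterMap f + t.filterMap f := by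
  induction s using Multiset.induction with
  | empty => simp
  | cons a s ih =>
    cases hfa : f a <;>
      simp [Multiset.cons_add, hfa, ih]

private lemma fm_none {α β : Type*} (s : Multiset α) :
    s.filterMap (fun _ => (none : Option β)) = 0 := by
  induction s using Multiset.induction with
  | empty => simp
  | cons a s ih => simp [ih]

/-- the encoding of a bigraph as a multiset of relational facts is
injective: equal encodings come from equal bigraphs. -/
theorem stmt11 [DecidableEq ν] (B B' : RBigraph ν κ)
    (h : B.encode = B'.encode) : B = B' := by
  have ext : ∀ {α : Type} (g : BFact ν κ → Option α),
      Multiset.filterMap g B.encode = Multiset.filterMap g B'.encode :=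
    fun g => congrArg _ h
  have hnodes : B.nodes = B'.nodes := Finset.val_injective (by
    simpa [RBigraph.encode, fm_add, Multiset.filterMap_map,
      Function.comp_def, fm_none, Multiset.filterMap_some] using
      ext (fun f => match f with | .is_node v => some v | _ => none))
  have hroots : B.roots = B'.roots := Finset.val_injective (by
    simpa [RBigraph.encode, fm_add, Multiset.filterMap_map,
      Function.comp_def, fm_none, Multiset.filterMap_some] using
      ext (fun f => match f with | .is_root v => some v | _ => none))
  have hsites : B.sites = B'.sites := Finset.val_injective (by
    simpa [RBigraph.encode, fm_add, Multiset.filterMap_map,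
      Function.comp_def, fm_none, Multiset.filterMap_some] using
      ext (fun f => match f with | .is_site v => some v | _ => none))
  have hi : B.iNames = B'.iNames := Finset.val_injective (by
    simpa [RBigraph.encode, fm_add, Multiset.filterMap_map,
      Function.comp_def, fm_none, Multiset.filterMap_some] using
      ext (fun f => match f with | .is_i_name v => some v | _ => none))
  have ho : B.oNames = B'.oNames := Finset.val_injective (by
    simpa [RBigraph.encode, fm_add, Multiset.filterMap_map,
      Function.comp_def, fm_none, Multiset.filterMap_some] using
      ext (fun f => match f with | .is_o_name v => some v | _ => none))
  have he : B.edges = B'.edges := Finset.val_injective (by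
    simpa [RBigraph.encode, fm_add, Multiset.filterMap_map,
      Function.comp_def, fm_none, Multiset.filterMap_some] using
      ext (fun f => match f with | .is_e_name v => some v | _ => none))
  have hports : B.ports = B'.ports := Finset.val_injective (by
    simpa [RBigraph.encode, fm_add, Multiset.filterMap_map,
      Function.comp_def, fm_none, Multiset.filterMap_some] using
      ext (fun f => match f with | .is_port v => some v | _ => none))
  have hctrl : B.ctrlG = B'.ctrlG := Finset.val_injective (by
    simpa [RBigraph.encode, fm_add, Multiset.filterMap_map,
      Function.comp_def, fm_none, Multiset.filterMap_some] using
      ext (fun f => match f with | .lc v k => some (v, k) | _ => none))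
  have hprnt : B.prntG = B'.prntG := Finset.val_injective (by
    simpa [RBigraph.encode, fm_add, Multiset.filterMap_map,
      Function.comp_def, fm_none, Multiset.filterMap_some] using
      ext (fun f => match f with | .prnt v k => some (v, k) | _ => none))
  have hlink : B.linkG = B'.linkG := Finset.val_injective (by
    simpa [RBigraph.encode, fm_add, Multiset.filterMap_map,
      Function.comp_def, fm_none, Multiset.filterMap_some] using
      ext (fun f => match f with | .link v k => some (v, k) | _ => none))
  have hlp : B.lpG = B'.lpG := Finset.val_injective (by
    simpa [RBigraph.encode, fm_add, Multiset.filterMap_map,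
      Function.comp_def, fm_none, Multiset.filterMap_some] using
      ext (fun f => match f with | .lp v k => some (v, k) | _ => none))
  cases B; cases B'
  simp_all
end

section
/- Juxtaposition corresponds to multiset union of encodings: if B ≡ C ⊗ C' (with disjoint supports and names) then ⟦B⟧ = ⟦C⟧ ∪ ⟦C'⟧. -/
variable {ν κ : Type} [DecidableEq ν]

variable [DecidableEq κ]

/-- `out_C`: the interface-facing part of `⟦C⟧` at the outer interface. -/
def outPart (C : RBigraph ν κ) : Multiset (BFact ν κ) :=
  C.roots.val.map BFact.is_root +
  C.oNames.val.map BFact.is_o_name +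
  (C.prntG.filter (fun p => p.2 ∈ C.roots)).val.map (fun p => BFact.prnt p.1 p.2) +
  (C.linkG.filter (fun p => p.2 ∈ C.oNames)).val.map (fun p => BFact.link p.1 p.2)

/-- `in_C`: the interface-facing part of `⟦C⟧` at the inner interface. -/
def inPart (C : RBigraph ν κ) : Multiset (BFact ν κ) :=
  C.sites.val.map BFact.is_site +
  C.iNames.val.map BFact.is_i_name +
  (C.prntG.filter (fun p => p.1 ∈ C.sites)).val.map (fun p => BFact.prnt p.1 p.2) +
  (C.linkG.filter (fun p => p.1 ∈ C.iNames)).val.map (fun p => BFact.link p.1 p.2)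

/-- `C̃`: the remaining part of `⟦C⟧`. -/
def tilde (C : RBigraph ν κ) : Multiset (BFact ν κ) :=
  C.encode - outPart C - inPart C

/-- `eq_{CC'}`: the glueing facts of the composition `C ∘ C'`, where `σp` matches
each site of `C` with the corresponding root of `C'`, and `σl` matches each inner
name of `C` with the corresponding outer name of `C'`. -/
def eqFacts (C C' : RBigraph ν κ) (σp σl : ν → ν) : Multiset (BFact ν κ) :=
  ((C'.prntG ×ˢ C.prntG).filter
      (fun q => q.1.2 ∈ C'.roots ∧ q.2.1 ∈ C.sites ∧ q.1.2 = σp q.2.1)).val.map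
    (fun q => BFact.prnt q.1.1 q.2.2) +
  ((C'.linkG ×ˢ C.linkG).filter
      (fun q => q.1.2 ∈ C'.oNames ∧ q.2.1 ∈ C.iNames ∧ q.1.2 = σl q.2.1)).val.map
    (fun q => BFact.link q.1.1 q.2.2)

/-- Composition `C ∘ C'` of relational bigraphs, glueing the sites of `C` to the
roots of `C'` (via `σp`) and the inner names of `C` to the outer names of `C'`
(via `σl`). -/
def rcomp (C C' : RBigraph ν κ) (σp σl : ν → ν) : RBigraph ν κ where
  nodes := C.nodes ∪ C'.nodes
  roots := C.roots
  sites := C'.sites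
  iNames := C'.iNames
  oNames := C.oNames
  edges := C.edges ∪ C'.edges
  ports := C.ports ∪ C'.ports
  ctrlG := C.ctrlG ∪ C'.ctrlG
  prntG :=
    C.prntG.filter (fun p => p.1 ∉ C.sites) ∪
    C'.prntG.filter (fun p => p.2 ∉ C'.roots) ∪
    ((C'.prntG ×ˢ C.prntG).filter
        (fun q => q.1.2 ∈ C'.roots ∧ q.2.1 ∈ C.sites ∧ q.1.2 = σp q.2.1)).image
      (fun q => (q.1.1, q.2.2))
  linkG :=
    C.linkG.filter (fun p => p.1 ∉ C.iNames) ∪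
    C'.linkG.filter (fun p => p.2 ∉ C'.oNames) ∪
    ((C'.linkG ×ˢ C.linkG).filter
        (fun q => q.1.2 ∈ C'.oNames ∧ q.2.1 ∈ C.iNames ∧ q.1.2 = σl q.2.1)).image
      (fun q => (q.1.1, q.2.2))
  lpG := C.lpG ∪ C'.lpG

/-- Juxtaposition `C ⊗ C'` of relational bigraphs with disjoint supports. -/
def rjuxt (C C' : RBigraph ν κ) : RBigraph ν κ where
  nodes := C.nodes ∪ C'.nodes
  roots := C.roots ∪ C'.roots
  sites := C.sites ∪ C'.sites
  iNames := C.iNames ∪ C'.iNames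
  oNames := C.oNames ∪ C'.oNames
  edges := C.edges ∪ C'.edges
  ports := C.ports ∪ C'.ports
  ctrlG := C.ctrlG ∪ C'.ctrlG
  prntG := C.prntG ∪ C'.prntG
  linkG := C.linkG ∪ C'.linkG
  lpG := C.lpG ∪ C'.lpG

/-- A relational bigraph is ground when its inner interface is empty. -/
def RBigraph.Ground (B : RBigraph ν κ) : Prop :=
  B.sites = ∅ ∧ B.iNames = ∅

lemma dU {s t : Finset ν} (h : Disjoint s t) : (s ∪ t).val = s.val + t.val := by
  rw [← Finset.disjUnion_eq_union s t h]; rfl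

/-- juxtaposition corresponds to (disjoint) union of encodings:
`⟦C ⊗ C'⟧ = ⟦C⟧ ∪ ⟦C'⟧`. -/
theorem stmt17 (C C' : RBigraph ν κ)
    (hC : C.WF) (hC' : C'.WF) (hdisj : Disjoint C.names C'.names)
    (B : RBigraph ν κ) (hB : B = rjuxt C C') :
    B.encode = C.encode + C'.encode := by
  subst hB
  obtain ⟨-,-,-,-,-,-,-,-,-,-,-,-,-,-,-,-,-,-,-,-,-, -, hCctrl, -, hCprnt, -, hClink, -, hClp⟩ := hC
  obtain ⟨-,-,-,-,-,-,-,-,-,-,-,-,-,-,-,-,-,-,-,-,-, -, hC'ctrl, -, hC'prnt, -, hC'link, -, hC'lp⟩ := hC'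
  have hsub : ∀ (D : RBigraph ν κ), D.nodes ⊆ D.names ∧ D.roots ⊆ D.names ∧
      D.sites ⊆ D.names ∧ D.iNames ⊆ D.names ∧ D.oNames ⊆ D.names ∧
      D.edges ⊆ D.names ∧ D.ports ⊆ D.names := by
    intro D
    unfold RBigraph.names
    refine ⟨?_,?_,?_,?_,?_,?_,?_⟩ <;> intro x hx <;> simp [Finset.mem_union] <;> tauto
  have hd : ∀ s t : Finset ν, s ⊆ C.names → t ⊆ C'.names → Disjoint s t :=
    fun s t hs ht => hdisj.mono hs ht
  obtain ⟨n1, r1, s1, i1, o1, e1, p1⟩ := hsub C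
  obtain ⟨n2, r2, s2, i2, o2, e2, p2⟩ := hsub C'
  have hnodes := hd _ _ n1 n2
  have hroots := hd _ _ r1 r2
  have hsites := hd _ _ s1 s2
  have hin := hd _ _ i1 i2
  have hon := hd _ _ o1 o2
  have hedges := hd _ _ e1 e2
  have hports := hd _ _ p1 p2
  have hctrl : Disjoint C.ctrlG C'.ctrlG := by
    rw [Finset.disjoint_left]
    intro p hp hp'
    exact (Finset.disjoint_left.mp hnodes) (hCctrl p hp) (hC'ctrl p hp')
  have hprnt : Disjoint C.prntG C'.prntG := by
    rw [Finset.disjoint_left]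
    intro p hp hp'
    have h1 := (hCprnt p hp).1
    have h2 := (hC'prnt p hp').1
    exact (Finset.disjoint_left.mp
      (hd _ _ (Finset.union_subset n1 s1) (Finset.union_subset n2 s2))) h1 h2
  have hlink : Disjoint C.linkG C'.linkG := by
    rw [Finset.disjoint_left]
    intro p hp hp'
    exact (Finset.disjoint_left.mp
      (hd _ _ (Finset.union_subset i1 p1) (Finset.union_subset i2 p2)))
      (hClink p hp).1 (hC'link p hp').1
  have hlp : Disjoint C.lpG C'.lpG := by
    rw [Finset.disjoint_left]
    intro p hp hp'
    exact (Finset.disjoint_left.mp hports) (hClp p hp).1 (hC'lp p hp').1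
  have hnr : Disjoint (C.nodes ∪ C.roots) (C'.nodes ∪ C'.roots) :=
    hd _ _ (Finset.union_subset n1 r1) (Finset.union_subset n2 r2)
  -- childP facts
  have hcp1 : ∀ d ∈ C.nodes ∪ C.roots, (rjuxt C C').childP d = C.childP d := by
    intro d hdm
    unfold RBigraph.childP rjuxt
    simp only [Finset.filter_union]
    have : C'.prntG.filter (fun p => p.2 = d) = ∅ := by
      rw [Finset.filter_eq_empty_iff]
      intro p hp he
      have := (hC'prnt p hp).2
      rw [he] at this
      exact (Finset.disjoint_left.mp hnr) hdm this
    rw [this, Finset.union_empty]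
  have hcp2 : ∀ d ∈ C'.nodes ∪ C'.roots, (rjuxt C C').childP d = C'.childP d := by
    intro d hdm
    unfold RBigraph.childP rjuxt
    simp only [Finset.filter_union]
    have : C.prntG.filter (fun p => p.2 = d) = ∅ := by
      rw [Finset.filter_eq_empty_iff]
      intro p hp he
      have := (hCprnt p hp).2
      rw [he] at this
      exact (Finset.disjoint_right.mp hnr) hdm this
    rw [this, Finset.empty_union]
  have hcl1 : ∀ d ∈ C.oNames, (rjuxt C C').childL d = C.childL d := by
    intro d hdm
    unfold RBigraph.childL rjuxt
    simp only [Finset.filter_union]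
    have : C'.linkG.filter (fun p => p.2 = d) = ∅ := by
      rw [Finset.filter_eq_empty_iff]
      intro p hp he
      have h2 := (hC'link p hp).2
      rw [he] at h2
      exact (Finset.disjoint_left.mp
        (hd _ _ o1 (Finset.union_subset e2 o2))) hdm h2
    rw [this, Finset.union_empty]
  have hcl2 : ∀ d ∈ C'.oNames, (rjuxt C C').childL d = C'.childL d := by
    intro d hdm
    unfold RBigraph.childL rjuxt
    simp only [Finset.filter_union]
    have : C.linkG.filter (fun p => p.2 = d) = ∅ := by
      rw [Finset.filter_eq_empty_iff]
      intro p hp he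
      have h2 := (hClink p hp).2
      rw [he] at h2
      exact (Finset.disjoint_right.mp
        (hd _ _ (Finset.union_subset e1 o1) o2)) hdm h2
    rw [this, Finset.empty_union]
  have hset : (C.nodes ∪ C'.nodes) ∪ (C.roots ∪ C'.roots)
      = (C.nodes ∪ C.roots) ∪ (C'.nodes ∪ C'.roots) := by
    rw [Finset.union_assoc, ← Finset.union_assoc C'.nodes, Finset.union_comm C'.nodes C.roots,
        Finset.union_assoc, ← Finset.union_assoc]
  have m1 : (C.nodes ∪ C.roots).val.map
      (fun d => BFact.has_child_p (κ := κ) d ((rjuxt C C').childP d)) =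
      (C.nodes ∪ C.roots).val.map (fun d => BFact.has_child_p d (C.childP d)) :=
    Multiset.map_congr rfl (fun d hdm => by rw [hcp1 d hdm])
  have m2 : (C'.nodes ∪ C'.roots).val.map
      (fun d => BFact.has_child_p (κ := κ) d ((rjuxt C C').childP d)) =
      (C'.nodes ∪ C'.roots).val.map (fun d => BFact.has_child_p d (C'.childP d)) :=
    Multiset.map_congr rfl (fun d hdm => by rw [hcp2 d hdm])
  have m3 : C.oNames.val.map
      (fun d => BFact.has_child_l (κ := κ) d ((rjuxt C C').childL d)) =
      C.oNames.val.map (fun d => BFact.has_child_l d (C.childL d)) :=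
    Multiset.map_congr rfl (fun d hdm => by rw [hcl1 d hdm])
  have m4 : C'.oNames.val.map
      (fun d => BFact.has_child_l (κ := κ) d ((rjuxt C C').childL d)) =
      C'.oNames.val.map (fun d => BFact.has_child_l d (C'.childL d)) :=
    Multiset.map_congr rfl (fun d hdm => by rw [hcl2 d hdm])
  unfold RBigraph.encode
  rw [show (rjuxt C C').nodes = C.nodes ∪ C'.nodes from rfl,
      show (rjuxt C C').roots = C.roots ∪ C'.roots from rfl,
      show (rjuxt C C').sites = C.sites ∪ C'.sites from rfl,
      show (rjuxt C C').iNames = C.iNames ∪ C'.iNames from rfl,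
      show (rjuxt C C').oNames = C.oNames ∪ C'.oNames from rfl,
      show (rjuxt C C').edges = C.edges ∪ C'.edges from rfl,
      show (rjuxt C C').ports = C.ports ∪ C'.ports from rfl,
      show (rjuxt C C').ctrlG = C.ctrlG ∪ C'.ctrlG from rfl,
      show (rjuxt C C').prntG = C.prntG ∪ C'.prntG from rfl,
      show (rjuxt C C').linkG = C.linkG ∪ C'.linkG from rfl,
      show (rjuxt C C').lpG = C.lpG ∪ C'.lpG from rfl,
      hset, dU hnodes, dU hroots, dU hsites, dU hports, dU hin, dU hon, dU hedges,
      dU hctrl, dU hprnt, dU hlink, dU hlp, dU hnr]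
  simp only [Multiset.map_add]
  rw [m1, m2, m3, m4]
  abel
end
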